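/- Fix p_1,...,p_M, q_1,...,q_M ∈ (0,1) with p_i ≤ q_i, weights α_1,...,α_M > 0 summing to 1, and α ∈ (0,1). Let β_i = (p_i(1−q_i))/((1−p_i)q_i), β_max = max_i β_i, and α̂ = ∑_i p_i α_i/(p_i + β_max(1−p_i)). Let A > 0 be the unique number with ∑_i p_i α_i/(p_i + A(1−p_i)) = α, and c_i = p_i/(p_i + A(1−p_i)). Then: (i) α < α̂ implies A > β_max and c_i < q_i for all i; (ii) α = α̂ implies A = β_max, c_i = q_i for i with β_i = β_max and c_i < q_i otherwise; (iii) α > α̂ implies A < β_max and c_i > q_i for some i; (iv) ∑ p_i α_i ≤ α̂ ≤ ∑ q_i α_i, with equality on the left iff β_max = 1 and equality on the right iff all β_i are equal. -/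
import Mathlib


open Finset
open scoped BigOperators

lemma stmt17_key {a p B1 B2 : ℝ} (ha : 0 < a) (hp : 0 < p) (hp1 : p < 1)
    (hB1 : 0 ≤ B1) (h : B1 < B2) :
    a / (p + B2 * (1 - p)) < a / (p + B1 * (1 - p)) := by
  have h1 : 0 < p + B1 * (1 - p) := by nlinarith
  apply div_lt_div_of_pos_left ha h1
  nlinarith

/-- relations between `α`, `α̂`, `A`, `β_max` and the centres `c_i`. -/
theorem stmt17 {M : ℕ} (p q w : Fin M → ℝ) (α : ℝ)
    (hpq : ∀ i, 0 < p i ∧ p i ≤ q i ∧ q i < 1)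
    (hw : ∀ i, 0 < w i) (hwsum : ∑ i, w i = 1)
    (hα : 0 < α ∧ α < 1)
    (βmax : ℝ)
    (hβub : ∀ i, p i * (1 - q i) / ((1 - p i) * q i) ≤ βmax)
    (hβmem : ∃ i, p i * (1 - q i) / ((1 - p i) * q i) = βmax)
    (A : ℝ) (hA : 0 < A)
    (hAeq : ∑ i, p i * w i / (p i + A * (1 - p i)) = α) :
    let β : Fin M → ℝ := fun i => p i * (1 - q i) / ((1 - p i) * q i)
    let αhat : ℝ := ∑ i, p i * w i / (p i + βmax * (1 - p i))
    let c : Fin M → ℝ := fun i => p i / (p i + A * (1 - p i))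
    (α < αhat → βmax < A ∧ ∀ i, c i < q i) ∧
    (α = αhat → A = βmax ∧ (∀ i, β i = βmax → c i = q i) ∧
      (∀ i, β i ≠ βmax → c i < q i)) ∧
    (αhat < α → A < βmax ∧ ∃ i, q i < c i) ∧
    ((∑ i, p i * w i ≤ αhat ∧ αhat ≤ ∑ i, q i * w i) ∧
      (αhat = ∑ i, p i * w i ↔ βmax = 1) ∧
      (αhat = ∑ i, q i * w i ↔ ∀ i j : Fin M, β i = β j)) := by
  intro β αhat c
  have hp : ∀ i, 0 < p i := fun i => (hpq i).1
  have hq1 : ∀ i, q i < 1 := fun i => (hpq i).2.2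
  have hpq' : ∀ i, p i ≤ q i := fun i => (hpq i).2.1
  have hp1 : ∀ i, p i < 1 := fun i => lt_of_le_of_lt (hpq' i) (hq1 i)
  have hq0 : ∀ i, 0 < q i := fun i => lt_of_lt_of_le (hp i) (hpq' i)
  have hβpos : ∀ i, 0 < β i := by
    intro i
    have h1 := hp i; have h2 := hp1 i; have h3 := hq0 i; have h4 := hq1 i
    have : 0 < (1 - p i) * q i := by nlinarith
    exact div_pos (by nlinarith) this
  have hβle1 : ∀ i, β i ≤ 1 := by
    intro i
    have h1 := hp i; have h2 := hp1 i; have h3 := hq0 i; have h4 := hq1 i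
    have hd : 0 < (1 - p i) * q i := by nlinarith
    rw [div_le_one hd]
    nlinarith [hpq' i]
  obtain ⟨i0, hi0⟩ := hβmem
  have hβmaxpos : 0 < βmax := hi0 ▸ hβpos i0
  have hβmaxle1 : βmax ≤ 1 := hi0 ▸ hβle1 i0
  have hβleβmax : ∀ i, β i ≤ βmax := hβub
  -- denominator formula
  have hdenq : ∀ i, p i + β i * (1 - p i) = p i / q i := by
    intro i
    have h3 := (hq0 i).ne'
    have h5 := (sub_pos.mpr (hp1 i)).ne'
    show p i + p i * (1 - q i) / ((1 - p i) * q i) * (1 - p i) = p i / q i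
    field_simp
    ring
  have hqeq : ∀ i, p i / (p i + β i * (1 - p i)) = q i := by
    intro i
    rw [hdenq i, div_div_eq_mul_div, mul_comm, mul_div_assoc,
      div_self (hp i).ne', mul_one]
  have hqweq : ∀ i, p i * w i / (p i + β i * (1 - p i)) = q i * w i := by
    intro i
    rw [hdenq i, mul_comm (p i) (w i), mul_div_assoc, div_div_eq_mul_div,
      mul_comm (p i) (q i), mul_div_assoc, div_self (hp i).ne', mul_one, mul_comm]
  have hne : (Finset.univ : Finset (Fin M)).Nonempty := ⟨i0, mem_univ i0⟩
  -- sum is strictly decreasing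
  have hmono : ∀ B1 B2 : ℝ, 0 ≤ B1 → B1 < B2 →
      ∑ i, p i * w i / (p i + B2 * (1 - p i)) <
      ∑ i, p i * w i / (p i + B1 * (1 - p i)) := by
    intro B1 B2 h1 h12
    refine Finset.sum_lt_sum_of_nonempty hne (fun i _ => ?_)
    exact stmt17_key (mul_pos (hp i) (hw i)) (hp i) (hp1 i) h1 h12
  refine ⟨?_, ?_, ?_, ?_⟩
  · -- α < αhat
    intro h
    have hAβ : βmax < A := by
      by_contra hc
      push_neg at hc
      rcases lt_or_eq_of_le hc with h1 | h1
      · have := hmono A βmax hA.le h1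
        rw [hAeq] at this
        exact absurd h (not_lt.mpr this.le)
      · rw [h1] at hAeq
        exact (ne_of_lt h) hAeq.symm
    refine ⟨hAβ, fun i => ?_⟩
    have : β i < A := lt_of_le_of_lt (hβleβmax i) hAβ
    have := stmt17_key (hp i) (hp i) (hp1 i) (hβpos i).le this
    rwa [hqeq i] at this
  · -- α = αhat
    intro h
    have hAβ : A = βmax := by
      rcases lt_trichotomy A βmax with h1 | h1 | h1
      · have := hmono A βmax hA.le h1
        rw [hAeq] at this; exact absurd h (ne_of_gt this)
      · exact h1
      · have := hmono βmax A hβmaxpos.le h1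
        rw [hAeq] at this; exact absurd h (ne_of_lt this)
    refine ⟨hAβ, fun i hib => ?_, fun i hib => ?_⟩
    · show p i / (p i + A * (1 - p i)) = q i
      rw [hAβ, ← hib]; exact hqeq i
    · have : β i < A := hAβ ▸ lt_of_le_of_ne (hβleβmax i) hib
      have := stmt17_key (hp i) (hp i) (hp1 i) (hβpos i).le this
      rwa [hqeq i] at this
  · -- αhat < α
    intro h
    have hAβ : A < βmax := by
      by_contra hc
      push_neg at hc
      rcases lt_or_eq_of_le hc with h1 | h1
      · have := hmono βmax A hβmaxpos.le h1
        rw [hAeq] at this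
        exact absurd h (not_lt.mpr this.le)
      · rw [← h1] at hAeq
        exact (ne_of_gt h) hAeq.symm
    refine ⟨hAβ, ⟨i0, ?_⟩⟩
    have hA' : A < β i0 := by rw [show β i0 = βmax from hi0]; exact hAβ
    have := stmt17_key (hp i0) (hp i0) (hp1 i0) hA.le hA'
    rwa [hqeq i0] at this
  · -- fourth part
    have hleft : ∀ i, p i * w i = p i * w i / (p i + 1 * (1 - p i)) := by
      intro i; rw [one_mul]; ring_nf
    have hle1 : ∑ i, p i * w i ≤ αhat := by
      rcases eq_or_lt_of_le hβmaxle1 with h1 | h1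
      · apply le_of_eq
        simp only [αhat, h1]
        exact Finset.sum_congr rfl (fun i _ => by rw [one_mul]; ring_nf)
      · have := hmono βmax 1 hβmaxpos.le h1
        calc ∑ i, p i * w i = ∑ i, p i * w i / (p i + 1 * (1 - p i)) :=
              Finset.sum_congr rfl (fun i _ => hleft i)
          _ ≤ αhat := this.le
    have hle2 : αhat ≤ ∑ i, q i * w i := by
      refine le_trans (Finset.sum_le_sum (fun i _ => ?_))
        (le_of_eq (Finset.sum_congr rfl (fun i _ => hqweq i)))
      rcases eq_or_lt_of_le (hβleβmax i) with h1 | h1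
      · rw [h1]
      · exact (stmt17_key (mul_pos (hp i) (hw i)) (hp i) (hp1 i) (hβpos i).le h1).le
    refine ⟨⟨hle1, hle2⟩, ⟨?_, ?_⟩, ?_, ?_⟩
    · intro h
      by_contra hc
      have h1 : βmax < 1 := lt_of_le_of_ne hβmaxle1 hc
      have := hmono βmax 1 hβmaxpos.le h1
      rw [show ∑ i, p i * w i / (p i + 1 * (1 - p i)) = ∑ i, p i * w i from
        (Finset.sum_congr rfl (fun i _ => (hleft i).symm))] at this
      exact absurd h (ne_of_gt this)
    · intro h
      simp only [αhat, h]
      exact Finset.sum_congr rfl (fun i _ => by rw [one_mul]; ring_nf)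
    · intro h i j
      have hall : ∀ i, β i = βmax := by
        intro i
        by_contra hc
        have hib : β i < βmax := lt_of_le_of_ne (hβleβmax i) hc
        have hstrict : αhat < ∑ i, q i * w i := by
          rw [show (∑ i, q i * w i) = ∑ i, p i * w i / (p i + β i * (1 - p i)) from
            (Finset.sum_congr rfl (fun i _ => (hqweq i).symm))]
          refine Finset.sum_lt_sum (fun k _ => ?_) ⟨i, mem_univ i, ?_⟩
          · rcases eq_or_lt_of_le (hβleβmax k) with h1 | h1
            · rw [h1]
            · exact (stmt17_key (mul_pos (hp k) (hw k)) (hp k) (hp1 k)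
                (hβpos k).le h1).le
          · exact stmt17_key (mul_pos (hp i) (hw i)) (hp i) (hp1 i) (hβpos i).le hib
        exact absurd h (ne_of_lt hstrict)
      rw [hall i, hall j]
    · intro h
      have : ∀ i, β i = βmax := fun i => (h i i0).trans hi0
      calc αhat = ∑ i, p i * w i / (p i + β i * (1 - p i)) :=
            Finset.sum_congr rfl (fun i _ => by rw [this i])
        _ = ∑ i, q i * w i := Finset.sum_congr rfl (fun i _ => hqweq i)
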